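/- Let f_n^d(w_1,...,w_n) be the polynomial obtained from e_d(w_{11},...,w_{nd})/binom(nd, d) (elementary symmetric of degree d in nd variables) by substituting w_{ij} -> w_i for all i, j. Then for every y in R^n not parallel to (1,...,1), the univariate polynomial t -> f_n^d(t·1 - y) has only real and distinct zeros. -/

import Mathlib

open MvPolynomial Polynomial

/-- `f_n^d` is obtained from `e_d(w₁₁, …, w_{nd}) / binom(nd, d)` (the elementary symmetric
polynomial of degree `d` in `n·d` variables) by substituting `w_{ij} ↦ w_i`. -/
noncomputable def fnd (n d : ℕ) : MvPolynomial (Fin n) ℝ :=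
  MvPolynomial.C (((n * d).choose d : ℝ))⁻¹ *
    MvPolynomial.rename (Prod.fst : Fin n × Fin d → Fin n)
      (MvPolynomial.esymm (Fin n × Fin d) ℝ d)

/-!
Substituting `w_i ↦ t - y_i` turns `binom(nd, d) f_n^d` into `e_d(t - ỹ₁, …, t - ỹ_{nd})`, and for
monic linear factors `D e_{k+1} = (nd - k) e_k`, so this is `D^{nd-d} ∏ₖ (t - ỹₖ) / (nd-d)!`.
Differentiating a real-rooted polynomial keeps it real-rooted (Rolle) and lowers the multiplicity of
each root by one without creating new multiple roots: at a non-root `z` of `p`, Laguerre's form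
`p'² - p p''` equals `p(z)² ∑ᵣ (z - r)⁻² > 0`. As `y` is not constant, each root of `∏ₖ (t - ỹₖ)`
has multiplicity at most `(n-1)d = nd - d`, so all roots of the `(nd-d)`-th derivative are simple.
-/

namespace Multiset

section Esymm

variable {R : Type*} [CommSemiring R]

theorem esymm_zero (s : Multiset R) : s.esymm 0 = 1 := by
  simp [esymm]

theorem esymm_cons_succ (a : R) (s : Multiset R) (k : ℕ) :
    (a ::ₘ s).esymm (k + 1) = s.esymm (k + 1) + a * s.esymm k := by
  simp [esymm, powersetCard_cons, map_map, ← sum_map_mul_left]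

theorem esymm_card (s : Multiset R) : s.esymm (card s) = s.prod := by
  simp [esymm, powersetCard_self]

end Esymm

theorem count_map_fst_univ_le {ι κ α : Type*} [Fintype ι] [Fintype κ] [DecidableEq α]
    (y : ι → α) {z : α} (hz : y ≠ fun _ => z) :
    (Finset.univ.val.map fun ij : ι × κ => y ij.1).count z
      ≤ (Fintype.card ι - 1) * Fintype.card κ := by
  obtain ⟨i, hi⟩ : ∃ i, y i ≠ z := by
    by_contra! h
    exact hz (funext h)
  have hlt : (Finset.univ.filter fun i => z = y i).card < Fintype.card ι :=
    Finset.card_lt_univ_of_notMem (x := i) (by simp [Ne.symm hi])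
  rw [count_map, ← Finset.filter_val, Finset.card_val, ← Finset.univ_product_univ,
    Finset.filter_product_left (fun i => z = y i), Finset.card_product, Finset.card_univ]
  exact Nat.mul_le_mul_right _ (by omega)

end Multiset

namespace Polynomial

section Esymm

variable {R : Type*} [CommRing R]

theorem derivative_esymm_succ (s : Multiset R[X]) (hs : ∀ p ∈ s, derivative p = 1) (k : ℕ) :
    derivative (s.esymm (k + 1)) = (Multiset.card s - k : R[X]) * s.esymm k := by
  induction s using Multiset.induction generalizing k with
  | empty => cases k <;> simp [Multiset.esymm, Multiset.powersetCard_zero_right]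
  | cons a t ih =>
    have ha : derivative a = 1 := hs a (Multiset.mem_cons_self a t)
    have ht : ∀ p ∈ t, derivative p = 1 := fun p hp => hs p (Multiset.mem_cons_of_mem hp)
    rcases k with _ | j
    · simp [Multiset.esymm_cons_succ, Multiset.esymm_zero, ih ht, ha]
    · simp only [Multiset.esymm_cons_succ, derivative_add, derivative_mul, ih ht, ha,
        Multiset.card_cons]
      push_cast
      ring

theorem iterate_derivative_prod_eq_factorial_mul_esymm (s : Multiset R[X])
    (hs : ∀ p ∈ s, derivative p = 1) {j k : ℕ} (hjk : j + k = Multiset.card s) :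
    derivative^[j] s.prod = (j.factorial : R[X]) * s.esymm k := by
  induction j generalizing k with
  | zero =>
    obtain rfl : k = Multiset.card s := by omega
    simp [Multiset.esymm_card]
  | succ j ih =>
    rw [Function.iterate_succ_apply', ih (k := k + 1) (by omega), derivative_natCast_mul,
      derivative_esymm_succ s hs, ← mul_assoc, ← hjk]
    push_cast [Nat.factorial_succ]
    ring

end Esymm

section Laguerre

variable {R : Type*} [CommRing R]

noncomputable def laguerre (p : R[X]) : R[X] :=
  derivative p ^ 2 - p * derivative (derivative p)

theorem laguerre_C_mul (c : R) (p : R[X]) : laguerre (C c * p) = C c ^ 2 * laguerre p := by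
  simp only [laguerre, derivative_C_mul]
  ring

theorem laguerre_X_sub_C_mul (a : R) (p : R[X]) :
    laguerre ((X - C a) * p) = p ^ 2 + (X - C a) ^ 2 * laguerre p := by
  simp only [laguerre, derivative_mul, derivative_add, derivative_sub, derivative_X,
    derivative_C, sub_zero, one_mul]
  ring

theorem eval_laguerre_prod_X_sub_C_nonneg (s : Multiset ℝ) (z : ℝ) :
    0 ≤ eval z (laguerre (s.map (X - C ·)).prod) := by
  induction s using Multiset.induction with
  | empty => simp [laguerre]
  | cons a t ih =>
    rw [Multiset.map_cons, Multiset.prod_cons, laguerre_X_sub_C_mul]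
    simp only [eval_add, eval_mul, eval_pow, eval_sub, eval_X, eval_C]
    positivity

theorem Splits.eval_laguerre_pos {p : ℝ[X]} (hp : p.Splits) (hdeg : p.natDegree ≠ 0) {z : ℝ}
    (hz : ¬ p.IsRoot z) : 0 < eval z (laguerre p) := by
  have hp0 : p ≠ 0 := by rintro rfl; exact hdeg natDegree_zero
  obtain ⟨a, ha⟩ := Multiset.exists_mem_of_ne_zero (hp.roots_ne_zero hdeg)
  obtain ⟨t, ht⟩ := Multiset.exists_cons_of_mem ha
  have hfac := hp.eq_prod_roots
  rw [ht, Multiset.map_cons, Multiset.prod_cons] at hfac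
  set T := (t.map (X - C ·)).prod
  have hT : eval z T ≠ 0 := by
    intro h
    apply hz
    rw [IsRoot, hfac]
    simp [h]
  rw [hfac, laguerre_C_mul, laguerre_X_sub_C_mul]
  simp only [eval_add, eval_mul, eval_pow, eval_sub, eval_X, eval_C]
  have hT_laguerre := eval_laguerre_prod_X_sub_C_nonneg t z
  have hlc := leadingCoeff_ne_zero.mpr hp0
  positivity

end Laguerre

theorem iterate_derivative_ne_zero {R : Type*} [Semiring R] [NoZeroDivisors R] [CharZero R]
    {p : R[X]} (hp : p ≠ 0) {k : ℕ} (hk : k ≤ p.natDegree) : derivative^[k] p ≠ 0 := by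
  intro h
  have := congrArg (coeff · (p.natDegree - k)) h
  simp only [coeff_iterate_derivative, Nat.sub_add_cancel hk, coeff_zero, nsmul_eq_mul] at this
  exact mul_ne_zero (Nat.cast_ne_zero.mpr (Nat.descFactorial_pos.mpr hk).ne')
    (leadingCoeff_ne_zero.mpr hp) this

theorem rootMultiplicity_C_mul {F : Type*} [Field F] {c : F} (hc : c ≠ 0) (p : F[X]) (z : F) :
    rootMultiplicity z (C c * p) = rootMultiplicity z p := by
  classical
  rw [← count_roots, roots_C_mul _ hc, count_roots]

theorem Splits.squarefree_of_rootMultiplicity_le_one {F : Type*} [Field F] {p : F[X]}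
    (hp : p.Splits) (hp0 : p ≠ 0) (h : ∀ z, rootMultiplicity z p ≤ 1) : Squarefree p := by
  classical
  refine ((nodup_roots_iff_of_splits hp0 hp).mp ?_).squarefree
  exact Multiset.nodup_iff_count_le_one.mpr fun z => (count_roots p).trans_le (h z)

section RealRooted

protected theorem Splits.derivative {p : ℝ[X]} (hp : p.Splits) : (derivative p).Splits := by
  rw [splits_iff_card_roots] at hp ⊢
  have := card_roots_le_derivative p
  have := card_roots' (derivative p)
  have := natDegree_derivative_le p
  omega

protected theorem Splits.iterate_derivative {p : ℝ[X]} (hp : p.Splits) (k : ℕ) :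
    (derivative^[k] p).Splits := by
  induction k with
  | zero => exact hp
  | succ k ih => simpa only [Function.iterate_succ_apply'] using ih.derivative

theorem Splits.rootMultiplicity_derivative_le_one {p : ℝ[X]} (hp : p.Splits) {z : ℝ}
    (hz : ¬ p.IsRoot z) : rootMultiplicity z (derivative p) ≤ 1 := by
  by_contra! h
  have hp' : derivative p ≠ 0 := by rintro h0; simp [h0] at h
  have hdeg : p.natDegree ≠ 0 := fun h0 => hp' (derivative_of_natDegree_zero h0)
  have h1 : (derivative p).IsRoot z := (rootMultiplicity_pos hp').mp (by omega)
  have h2 : (derivative (derivative p)).IsRoot z := by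
    have := derivative_rootMultiplicity_of_root h1
    have hp'' : derivative (derivative p) ≠ 0 := by rintro h0; simp [h0] at this; omega
    exact (rootMultiplicity_pos hp'').mp (by omega)
  have := hp.eval_laguerre_pos hdeg hz
  simp [laguerre, h1.eq_zero, h2.eq_zero] at this

theorem Splits.rootMultiplicity_derivative_le {p : ℝ[X]} (hp : p.Splits) (z : ℝ) :
    rootMultiplicity z (derivative p) ≤ max (rootMultiplicity z p - 1) 1 := by
  by_cases hz : p.IsRoot z
  · exact (derivative_rootMultiplicity_of_root hz).le.trans (le_max_left _ _)
  · exact (hp.rootMultiplicity_derivative_le_one hz).trans (le_max_right _ _)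

theorem Splits.rootMultiplicity_iterate_derivative_le {p : ℝ[X]} (hp : p.Splits) (k : ℕ)
    (z : ℝ) : rootMultiplicity z (derivative^[k] p) ≤ max (rootMultiplicity z p - k) 1 := by
  induction k with
  | zero => simp
  | succ k ih =>
    rw [Function.iterate_succ_apply']
    have := (hp.iterate_derivative k).rootMultiplicity_derivative_le z
    omega

theorem rootMultiplicity_iterate_derivative_prod_X_sub_C_le_one (s : Multiset ℝ) {k : ℕ}
    (hs : ∀ z, s.count z ≤ k) (z : ℝ) :
    rootMultiplicity z (derivative^[k] (s.map (X - C ·)).prod) ≤ 1 := by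
  have hp : (s.map (X - C ·)).prod.Splits := Splits.multisetProd (by simp [Splits.X_sub_C])
  have hle := hp.rootMultiplicity_iterate_derivative_le k z
  rw [← count_roots (s.map (X - C ·)).prod, roots_multiset_prod_X_sub_C] at hle
  exact hle.trans (by have := hs z; omega)

theorem Splits.im_eq_zero_of_isRoot_map {p : ℝ[X]} (hp : p.Splits) (hp0 : p ≠ 0) {z : ℂ}
    (hz : (p.map (algebraMap ℝ ℂ)).IsRoot z) : z.im = 0 := by
  obtain ⟨x, rfl⟩ := hp.mem_range_of_isRoot hp0 hz
  simp

end RealRooted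

end Polynomial

theorem aeval_fnd {A : Type*} [CommRing A] [Algebra ℝ A] (n d : ℕ) (g : Fin n → A) :
    aeval g (fnd n d) = algebraMap ℝ A ((n * d).choose d : ℝ)⁻¹ *
      (Finset.univ.val.map fun ij : Fin n × Fin d => g ij.1).esymm d := by
  rw [fnd, map_mul, MvPolynomial.aeval_C, aeval_rename, aeval_esymm_eq_multiset_esymm]
  rfl

theorem aeval_fnd_X_sub_C {n : ℕ} (hn : n ≠ 0) (d : ℕ) (y : Fin n → ℝ) :
    MvPolynomial.aeval (fun i => Polynomial.X - Polynomial.C (y i)) (fnd n d) =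
      Polynomial.C (((n * d).choose d : ℝ)⁻¹ * ((n * d - d).factorial : ℝ)⁻¹) *
        derivative^[n * d - d]
          (((Finset.univ.val.map fun ij : Fin n × Fin d => y ij.1).map
            (Polynomial.X - Polynomial.C ·)).prod) := by
  have hN : n * d - d + d = n * d := Nat.sub_add_cancel (Nat.le_mul_of_pos_left d (by omega))
  have hX : ∀ q ∈ (Finset.univ.val.map fun ij : Fin n × Fin d => y ij.1).map
      (Polynomial.X - Polynomial.C ·), derivative q = 1 := by
    intro q hq
    obtain ⟨r, -, rfl⟩ := Multiset.mem_map.mp hq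
    simp
  rw [aeval_fnd, iterate_derivative_prod_eq_factorial_mul_esymm _ hX (by simpa using hN),
    ← mul_assoc, ← map_natCast Polynomial.C, ← map_mul, mul_assoc,
    inv_mul_cancel₀ (by positivity), mul_one, Multiset.map_map, Polynomial.algebraMap_eq]
  rfl

theorem fnd_real_distinct_roots_general (n d : ℕ)
    (y : Fin n → ℝ) (hy : ∀ c : ℝ, y ≠ fun _ => c) :
    (∀ z : ℂ,
        ((MvPolynomial.aeval (fun i : Fin n => (Polynomial.X - Polynomial.C (y i) : Polynomial ℝ))
            (fnd n d)).map (algebraMap ℝ ℂ)).IsRoot z → z.im = 0) ∧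
    Squarefree (MvPolynomial.aeval
        (fun i : Fin n => (Polynomial.X - Polynomial.C (y i) : Polynomial ℝ)) (fnd n d)) := by
  have hn : n ≠ 0 := by
    rintro rfl
    exact hy 0 (Subsingleton.elim _ _)
  set M : Multiset ℝ := Finset.univ.val.map fun ij : Fin n × Fin d => y ij.1
  have hM (z : ℝ) : M.count z ≤ n * d - d := by
    simpa [Nat.sub_one_mul] using Multiset.count_map_fst_univ_le (κ := Fin d) y (hy z)
  set D := derivative^[n * d - d] (M.map (Polynomial.X - Polynomial.C ·)).prod
  have hD : D.Splits := (Splits.multisetProd (by simp [Splits.X_sub_C])).iterate_derivative _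
  have hD0 : D ≠ 0 := iterate_derivative_ne_zero
    (monic_multiset_prod_of_monic _ _ fun r _ => monic_X_sub_C r).ne_zero
    (by simp [M])
  have hc : ((n * d).choose d : ℝ)⁻¹ * ((n * d - d).factorial : ℝ)⁻¹ ≠ 0 := by
    have : (n * d).choose d ≠ 0 := (Nat.choose_pos (Nat.le_mul_of_pos_left d (by omega))).ne'
    positivity
  rw [aeval_fnd_X_sub_C hn]
  have hq0 := mul_ne_zero (Polynomial.C_ne_zero.mpr hc) hD0
  refine ⟨fun z => (hD.C_mul _).im_eq_zero_of_isRoot_map hq0,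
    (hD.C_mul _).squarefree_of_rootMultiplicity_le_one hq0 fun z => ?_⟩
  rw [rootMultiplicity_C_mul hc]
  exact rootMultiplicity_iterate_derivative_prod_X_sub_C_le_one M hM z

/-- For `1 ≤ d ≤ n` and every `y ∈ ℝⁿ` not parallel to `(1,…,1)`, the univariate polynomial
`t ↦ f_n^d(t·1 - y)` has only real and distinct zeros: it is squarefree and all its complex
roots are real. -/
theorem fnd_real_distinct_roots (n d : ℕ) (hd : 1 ≤ d) (hdn : d ≤ n)
    (y : Fin n → ℝ) (hy : ∀ c : ℝ, y ≠ fun _ => c) :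
    (∀ z : ℂ,
        ((MvPolynomial.aeval (fun i : Fin n => (Polynomial.X - Polynomial.C (y i) : Polynomial ℝ))
            (fnd n d)).map (algebraMap ℝ ℂ)).IsRoot z → z.im = 0) ∧
    Squarefree (MvPolynomial.aeval
        (fun i : Fin n => (Polynomial.X - Polynomial.C (y i) : Polynomial ℝ)) (fnd n d)) :=
  fnd_real_distinct_roots_general n d y hy
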